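/- arXiv:1110.4425 — 6 statements merged into one kernel-verified Lean document; each statement's English description precedes it below -/
import Mathlib

section
/- Let a_0, …, a_n be complex numbers with a_0 ≠ 0, and let R be a nonzero complex polynomial with deg R ≤ n. Then there exists a complex polynomial Q with deg Q = deg R such that a_0 Q + a_1 Q' + ⋯ + a_n Q^{(n)} = R (as polynomials). -/
open Polynomial Finset

/-!
The operator `L = ∑ aⱼ Dʲ` is `a₀ • id` plus terms that strictly lower the degree, so `L` preserves
degrees. It is therefore injective on each finite-dimensional space `K[X]_{<d}`, which it maps to
itself, hence bijective there; a preimage `Q` of `R` then has `deg Q = deg (L Q) = deg R`.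
-/

theorem Polynomial.degree_iterate_derivative_le {R : Type*} [Semiring R] (p : R[X]) (k : ℕ) :
    (derivative^[k] p).degree ≤ p.degree := by
  induction k with
  | zero => rfl
  | succ k ih =>
    rw [Function.iterate_succ_apply']
    exact degree_derivative_le.trans ih

theorem Polynomial.degree_sum_C_mul_iterate_derivative {R : Type*} [Semiring R] [NoZeroDivisors R]
    (n : ℕ) (a : ℕ → R) (ha : a 0 ≠ 0) (Q : R[X]) :
    (∑ j ∈ range (n + 1), C (a j) * derivative^[j] Q).degree = Q.degree := by
  rcases eq_or_ne Q 0 with rfl | hQ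
  · simp
  have hlower : (∑ j ∈ range n, C (a (j + 1)) * derivative^[j + 1] Q).degree < Q.degree := by
    refine (degree_sum_le _ _).trans_lt <| (Finset.sup_lt_iff (bot_lt_iff_ne_bot.2 ?_)).2 ?_
    · rwa [ne_eq, degree_eq_bot]
    intro j _
    calc (C (a (j + 1)) * derivative^[j + 1] Q).degree
        ≤ (derivative^[j] (derivative Q)).degree := by
          rw [C_mul']; exact degree_smul_le _ _
      _ ≤ (derivative Q).degree := degree_iterate_derivative_le _ _
      _ < Q.degree := degree_derivative_lt hQ
  rw [sum_range_succ', add_comm, Function.iterate_zero_apply,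
    degree_add_eq_left_of_degree_lt (by rwa [degree_C_mul ha]), degree_C_mul ha]

theorem Polynomial.surjective_of_degree_apply_eq {K : Type*} [Field K] (L : K[X] →ₗ[K] K[X])
    (hL : ∀ p, (L p).degree = p.degree) : Function.Surjective L := by
  intro R
  set d := R.natDegree + 1
  have hmaps : ∀ p ∈ degreeLT K d, L p ∈ degreeLT K d := fun p hp => by
    rwa [mem_degreeLT, hL, ← mem_degreeLT]
  have : FiniteDimensional K (degreeLT K d) := .equiv (degreeLTEquiv K d).symm
  have hinj : Function.Injective (L.restrict hmaps) := by
    refine (injective_iff_map_eq_zero _).2 fun p hp => Subtype.ext ?_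
    rw [ZeroMemClass.coe_zero, ← degree_eq_bot, ← hL]
    simpa using congrArg Subtype.val hp
  have hR : R ∈ degreeLT K d := mem_degreeLT.2 <| degree_le_natDegree.trans_lt <| by
    exact_mod_cast Nat.lt_succ_self _
  obtain ⟨Q, hQ⟩ := LinearMap.injective_iff_surjective.1 hinj ⟨R, hR⟩
  exact ⟨Q, congrArg Subtype.val hQ⟩

theorem stmt_2_general (n : ℕ) (a : ℕ → ℂ) (ha : a 0 ≠ 0) (R : Polynomial ℂ) :
    ∃ Q : Polynomial ℂ, Q.degree = R.degree ∧
      ∑ j ∈ range (n + 1), C (a j) * Polynomial.derivative^[j] Q = R := by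
  let L : ℂ[X] →ₗ[ℂ] ℂ[X] := ∑ j ∈ range (n + 1), a j • derivative ^ j
  have hL : ∀ Q, L Q = ∑ j ∈ range (n + 1), C (a j) * derivative^[j] Q := fun Q => by
    simp only [L, LinearMap.coe_sum, Finset.sum_apply, LinearMap.coe_smul, Pi.smul_apply,
      Module.End.pow_apply, smul_eq_C_mul]
  obtain ⟨Q, hQ⟩ := surjective_of_degree_apply_eq L
    (fun p => by rw [hL, degree_sum_C_mul_iterate_derivative n a ha]) R
  refine ⟨Q, ?_, (hL Q).symm.trans hQ⟩
  rw [← hQ, hL, degree_sum_C_mul_iterate_derivative n a ha]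

theorem stmt_2 (n : ℕ) (a : ℕ → ℂ) (ha : a 0 ≠ 0) (R : Polynomial ℂ) (hR : R ≠ 0)
    (hdeg : R.degree ≤ (n : ℕ)) :
    ∃ Q : Polynomial ℂ, Q.degree = R.degree ∧
      ∑ j ∈ range (n + 1), C (a j) * Polynomial.derivative^[j] Q = R :=
  stmt_2_general n a ha R
end

section
/- Let a_0, …, a_n be real numbers with a_0 ≠ 0, and let R be a nonzero real polynomial. Then there exists a real polynomial Q with deg Q = deg R such that a_0 Q + a_1 Q' + ⋯ + a_n Q^{(n)} = R. -/
/-!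
The operator `Q ↦ ∑ a_j Q^{(j)}` is multiplication by `a_0` up to terms of strictly lower
degree. Hence `Q₀ = R / a_0` solves the equation up to an error of lower degree, and by induction
on the degree that error has a preimage of its own (lower) degree; adding it to `Q₀` gives a
solution of degree `deg R`.
-/

open Polynomial Finset

namespace Polynomial

variable {K : Type*}

theorem degree_iterate_derivative_le_s3 [Semiring K] (p : K[X]) (k : ℕ) :
    (derivative^[k] p).degree ≤ p.degree := by
  induction k with
  | zero => rfl
  | succ k ih =>
    rw [Function.iterate_succ_apply']
    exact degree_derivative_le.trans ih

theorem degree_iterate_derivative_lt [Semiring K] {p : K[X]} (hp : p ≠ 0) {k : ℕ} (hk : k ≠ 0) :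
    (derivative^[k] p).degree < p.degree := by
  obtain ⟨k, rfl⟩ := Nat.exists_eq_succ_of_ne_zero hk
  rw [Function.iterate_succ_apply]
  exact (degree_iterate_derivative_le_s3 _ k).trans_lt (degree_derivative_lt hp)

theorem exists_degree_eq_of_degree_sub_C_mul_lt [Field K] (L : K[X] →+ K[X]) {c : K}
    (hc : c ≠ 0) (hL : ∀ p ≠ 0, (L p - C c * p).degree < p.degree) (R : K[X]) :
    ∃ Q : K[X], Q.degree = R.degree ∧ L Q = R := by
  suffices h : ∀ n : ℕ, ∀ R : K[X], R.degree < n → ∃ Q : K[X], Q.degree = R.degree ∧ L Q = R from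
    h _ R (degree_le_natDegree.trans_lt (WithBot.coe_lt_coe.2 R.natDegree.lt_succ_self))
  intro n
  induction n with
  | zero =>
    intro R hR
    rw [Nat.cast_zero, Nat.WithBot.lt_zero_iff, degree_eq_bot] at hR
    exact ⟨0, by rw [hR], by rw [hR, map_zero]⟩
  | succ n ih =>
    intro R hR
    by_cases hR0 : R = 0
    · exact ⟨0, by rw [hR0], by rw [hR0, map_zero]⟩
    set Q₀ := C c⁻¹ * R
    have hQ₀ : Q₀.degree = R.degree := by rw [degree_C_mul (inv_ne_zero hc)]
    have hCQ₀ : C c * Q₀ = R := by rw [← mul_assoc, ← C_mul, mul_inv_cancel₀ hc, C_1, one_mul]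
    have hE : (R - L Q₀).degree < R.degree :=
      calc (R - L Q₀).degree = (L Q₀ - C c * Q₀).degree := by rw [hCQ₀, ← degree_neg, neg_sub]
        _ < Q₀.degree := hL Q₀ (by rwa [← degree_ne_bot, hQ₀, degree_ne_bot])
        _ = R.degree := hQ₀
    have hEn : (R - L Q₀).degree < n :=
      hE.trans_le (Order.le_of_lt_succ (by exact_mod_cast hR))
    obtain ⟨Q', hQ'deg, hQ'⟩ := ih _ hEn
    refine ⟨Q₀ + Q', ?_, ?_⟩
    · rw [degree_add_eq_left_of_degree_lt (by rwa [hQ'deg, hQ₀]), hQ₀]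
    · rw [map_add, hQ', add_sub_cancel]

theorem degree_sum_C_mul_iterate_derivative_sub_lt [Ring K] (a : ℕ → K) (n : ℕ) {p : K[X]}
    (hp : p ≠ 0) :
    (∑ j ∈ range (n + 1), C (a j) * derivative^[j] p - C (a 0) * p).degree < p.degree := by
  rw [sum_range_succ', Function.iterate_zero_apply, add_sub_cancel_right]
  refine (degree_sum_le _ _).trans_lt
    ((Finset.sup_lt_iff (bot_lt_iff_ne_bot.2 (degree_ne_bot.2 hp))).2 fun j _ ↦ ?_)
  rw [← smul_eq_C_mul]
  exact (degree_smul_le _ _).trans_lt (degree_iterate_derivative_lt hp j.succ_ne_zero)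

end Polynomial

theorem stmt_3_general (n : ℕ) (a : ℕ → ℝ) (ha : a 0 ≠ 0) (R : Polynomial ℝ) :
    ∃ Q : Polynomial ℝ, Q.degree = R.degree ∧
      ∑ j ∈ range (n + 1), C (a j) * Polynomial.derivative^[j] Q = R :=
  exists_degree_eq_of_degree_sub_C_mul_lt
    (AddMonoidHom.mk' (fun Q ↦ ∑ j ∈ range (n + 1), C (a j) * derivative^[j] Q) fun p q ↦ by
      simp only [iterate_map_add, mul_add, sum_add_distrib])
    ha (fun _ ↦ degree_sum_C_mul_iterate_derivative_sub_lt a n) R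

theorem stmt_3 (n : ℕ) (a : ℕ → ℝ) (ha : a 0 ≠ 0) (R : Polynomial ℝ) (hR : R ≠ 0) :
    ∃ Q : Polynomial ℝ, Q.degree = R.degree ∧
      ∑ j ∈ range (n + 1), C (a j) * Polynomial.derivative^[j] Q = R :=
  stmt_3_general n a ha R
end

section
/- Let a_0, …, a_n be complex numbers, suppose there is an index k < n with a_0 = a_1 = ⋯ = a_k = 0 and a_{k+1} ≠ 0, and let R be a nonzero complex polynomial. Then there exists a complex polynomial Q_1 with deg Q_1 = deg R such that Q(t) = t^{k+1} Q_1(t) satisfies a_{k+1} Q^{(k+1)} + ⋯ + a_n Q^{(n)} = R. -/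
open Polynomial Finset

/-!
The map `T Q = ∑ a_j (X^(k+1) Q)^(j)` is linear, and since `a_j = 0` for `j ≤ k` only the
`j = k + 1` term reaches the top degree of `Q`: the leading coefficient of `T Q` is
`a_(k+1) (d+k+1)!/d!` times that of `Q`, where `d = deg Q`. So `T` preserves degrees; on the
finite-dimensional space of polynomials of degree `< m` it is then injective, hence surjective.
-/

namespace Polynomial

theorem surjective_of_degree_map_eq {K : Type*} [Field K] (f : K[X] →ₗ[K] K[X])
    (hf : ∀ p, (f p).degree = p.degree) : Function.Surjective f := by
  intro q
  let m := q.natDegree + 1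
  have hmaps : ∀ p ∈ degreeLT K m, f p ∈ degreeLT K m := fun p hp => by
    rwa [mem_degreeLT, hf, ← mem_degreeLT]
  have hinj : Function.Injective (f.restrict hmaps) := by
    rw [← LinearMap.ker_eq_bot, LinearMap.ker_eq_bot']
    intro p hp
    have := hf p
    rw [show f p = 0 from congrArg Subtype.val hp, degree_zero, eq_comm, degree_eq_bot] at this
    exact Subtype.ext this
  have hq : q ∈ degreeLT K m :=
    mem_degreeLT.2 (degree_le_natDegree.trans_lt (WithBot.coe_lt_coe.2 (Nat.lt_succ_self _)))
  obtain ⟨p, hp⟩ := LinearMap.injective_iff_surjective.1 hinj ⟨q, hq⟩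
  exact ⟨p, congrArg Subtype.val hp⟩

theorem coeff_iterate_derivative_X_pow_mul {R : Type*} [Semiring R] (m j i : ℕ) (p : R[X]) :
    (derivative^[j] (X ^ m * p)).coeff i =
      if m ≤ i + j then (i + j).descFactorial j • p.coeff (i + j - m) else 0 := by
  rw [coeff_iterate_derivative, coeff_X_pow_mul']
  split_ifs <;> simp

variable {R : Type*} [CommSemiring R]

noncomputable def derivCombMulXPow (n k : ℕ) (a : ℕ → R) : R[X] →ₗ[R] R[X] :=
  ∑ j ∈ range (n + 1), a j • ((derivative ^ j) ∘ₗ LinearMap.mulLeft R (X ^ (k + 1)))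

theorem derivCombMulXPow_apply (n k : ℕ) (a : ℕ → R) (p : R[X]) :
    derivCombMulXPow n k a p =
      ∑ j ∈ range (n + 1), C (a j) * derivative^[j] (X ^ (k + 1) * p) := by
  simp [derivCombMulXPow, LinearMap.sum_apply, Module.End.pow_apply, C_mul']

variable {n k : ℕ} {a : ℕ → R}

theorem coeff_derivCombMulXPow_of_natDegree_le (hkn : k < n) (hzero : ∀ j ≤ k, a j = 0)
    {p : R[X]} {i : ℕ} (hi : p.natDegree ≤ i) :
    (derivCombMulXPow n k a p).coeff i =
      a (k + 1) * (i + (k + 1)).descFactorial (k + 1) * p.coeff i := by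
  rw [derivCombMulXPow_apply, finsetSum_coeff,
    Finset.sum_eq_single_of_mem (k + 1) (mem_range.2 (by omega))]
  · rw [coeff_C_mul, coeff_iterate_derivative_X_pow_mul, if_pos (by omega), nsmul_eq_mul,
      Nat.add_sub_cancel, mul_assoc]
  · intro j _ hj
    rw [coeff_C_mul, coeff_iterate_derivative_X_pow_mul]
    rcases le_or_gt j k with hjk | hjk
    · rw [hzero j hjk, zero_mul]
    · rw [if_pos (by omega), coeff_eq_zero_of_natDegree_lt (by omega), smul_zero, mul_zero]

theorem degree_derivCombMulXPow [NoZeroDivisors R] [CharZero R] (hkn : k < n) (hzero : ∀ j ≤ k, a j = 0)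
    (hk1 : a (k + 1) ≠ 0) (p : R[X]) : (derivCombMulXPow n k a p).degree = p.degree := by
  rcases eq_or_ne p 0 with rfl | hp
  · rw [map_zero]
  have hle : (derivCombMulXPow n k a p).degree ≤ p.natDegree :=
    (degree_le_iff_coeff_zero _ _).2 fun i hi => by
      rw [coeff_derivCombMulXPow_of_natDegree_le hkn hzero (by exact_mod_cast hi.le),
        coeff_eq_zero_of_natDegree_lt (by exact_mod_cast hi), mul_zero]
  have hlead : (derivCombMulXPow n k a p).coeff p.natDegree ≠ 0 := by
    rw [coeff_derivCombMulXPow_of_natDegree_le hkn hzero le_rfl]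
    refine mul_ne_zero (mul_ne_zero hk1 ?_) (leadingCoeff_ne_zero.2 hp)
    exact Nat.cast_ne_zero.2 (Nat.descFactorial_eq_zero_iff_lt.not.2 (by omega))
  rw [degree_eq_of_le_of_coeff_ne_zero hle hlead, degree_eq_natDegree hp]

end Polynomial

theorem stmt_4_general (n k : ℕ) (hkn : k < n) (a : ℕ → ℂ)
    (hzero : ∀ j ≤ k, a j = 0) (hk1 : a (k + 1) ≠ 0)
    (R : Polynomial ℂ) :
    ∃ Q₁ : Polynomial ℂ, Q₁.degree = R.degree ∧
      ∑ j ∈ range (n + 1), C (a j) * Polynomial.derivative^[j] (X ^ (k + 1) * Q₁) = R := by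
  obtain ⟨Q₁, rfl⟩ :=
    surjective_of_degree_map_eq _ (degree_derivCombMulXPow hkn hzero hk1) R
  exact ⟨Q₁, (degree_derivCombMulXPow hkn hzero hk1 Q₁).symm,
    (derivCombMulXPow_apply n k a Q₁).symm⟩

theorem stmt_4 (n k : ℕ) (hkn : k < n) (a : ℕ → ℂ)
    (hzero : ∀ j ≤ k, a j = 0) (hk1 : a (k + 1) ≠ 0)
    (R : Polynomial ℂ) (hR : R ≠ 0) :
    ∃ Q₁ : Polynomial ℂ, Q₁.degree = R.degree ∧
      ∑ j ∈ range (n + 1), C (a j) * Polynomial.derivative^[j] (X ^ (k + 1) * Q₁) = R :=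
  stmt_4_general n k hkn a hzero hk1 R
end

section
/- Let p be the characteristic polynomial of the operator P(d/dt) = a_n (d/dt)^n + ⋯ + a_0 I with real coefficients, let γ ∈ ℂ with p(γ) ≠ 0, and let R be a nonzero real polynomial. Then there exists a complex polynomial Q with deg Q = deg R such that x(t) = Q(t) e^{γt} satisfies a_n x^{(n)}(t) + ⋯ + a_1 x'(t) + a_0 x(t) = R(t) e^{γt} for all t ∈ ℝ. -/
/-!
Conjugating by the exponential, `P(d/dt) (Q e^{γt}) = (p(d/dt + γ) Q) e^{γt}`, so the problem is to
solve `p(D + γ) Q = R` in polynomials, `D` the formal derivative. Since `D` lowers degrees,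
`p(D + γ)` acts on each polynomial as multiplication by `p(γ)` up to terms of lower degree; when
`p(γ) ≠ 0` such an operator is a degree-preserving bijection of `ℂ[X]`, by induction on the degree.
-/

open Polynomial Finset

namespace Polynomial

def IsScalarModLowerDegree {K : Type*} [CommRing K] (T : Module.End K K[X]) (c : K) : Prop :=
  ∀ Q : K[X], Q ≠ 0 → (T Q - c • Q).degree < Q.degree

namespace IsScalarModLowerDegree

variable {K : Type*}

section CommRing

variable [CommRing K] {S T : Module.End K K[X]} {c d : K}

theorem degree_apply_le (hT : IsScalarModLowerDegree T c) (Q : K[X]) :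
    (T Q).degree ≤ Q.degree := by
  rcases eq_or_ne Q 0 with rfl | hQ
  · simp
  calc (T Q).degree = (c • Q + (T Q - c • Q)).degree := by rw [add_sub_cancel]
    _ ≤ max (c • Q).degree (T Q - c • Q).degree := degree_add_le _ _
    _ ≤ Q.degree := max_le (degree_smul_le _ _) (hT Q hQ).le

theorem algebraMap (c : K) : IsScalarModLowerDegree (algebraMap K (Module.End K K[X]) c) c := by
  intro Q hQ
  simpa [bot_lt_iff_ne_bot, degree_eq_bot] using hQ

theorem add (hS : IsScalarModLowerDegree S c) (hT : IsScalarModLowerDegree T d) :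
    IsScalarModLowerDegree (S + T) (c + d) := by
  intro Q hQ
  have h : (S + T) Q - (c + d) • Q = (S Q - c • Q) + (T Q - d • Q) := by
    simp only [LinearMap.add_apply, add_smul]
    abel
  rw [h]
  exact (degree_add_le _ _).trans_lt (max_lt (hS Q hQ) (hT Q hQ))

theorem mul (hS : IsScalarModLowerDegree S c) (hT : IsScalarModLowerDegree T d) :
    IsScalarModLowerDegree (S * T) (c * d) := by
  intro Q hQ
  have h : (S * T) Q - (c * d) • Q = S (T Q - d • Q) + d • (S Q - c • Q) := by
    simp only [Module.End.mul_apply, map_sub, map_smul, smul_sub, smul_smul, mul_comm d c]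
    abel
  rw [h]
  refine (degree_add_le _ _).trans_lt (max_lt ?_ ?_)
  · exact (hS.degree_apply_le _).trans_lt (hT Q hQ)
  · exact (degree_smul_le _ _).trans_lt (hS Q hQ)

theorem aeval (hT : IsScalarModLowerDegree T c) (f : K[X]) :
    IsScalarModLowerDegree (Polynomial.aeval T f) (f.eval c) := by
  induction f using Polynomial.induction_on with
  | C a => simpa using IsScalarModLowerDegree.algebraMap a
  | add f g hf hg => simpa using hf.add hg
  | monomial k a ih => simpa [pow_succ, ← mul_assoc] using ih.mul hT

end CommRing

section Field

variable [Field K] {T : Module.End K K[X]} {c : K}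

theorem degree_apply_eq (hT : IsScalarModLowerDegree T c) (hc : c ≠ 0) (Q : K[X]) :
    (T Q).degree = Q.degree := by
  rcases eq_or_ne Q 0 with rfl | hQ
  · simp
  have hcQ := degree_smul_of_smul_regular Q (IsSMulRegular.of_ne_zero hc)
  rw [← sub_add_cancel (T Q) (c • Q), degree_add_eq_right_of_degree_lt (hcQ ▸ hT Q hQ), hcQ]

theorem surjective (hT : IsScalarModLowerDegree T c) (hc : c ≠ 0) : Function.Surjective T := by
  intro S
  induction S using (InvImage.wf degree wellFounded_lt).induction with
  | _ S ih =>
  rcases eq_or_ne S 0 with rfl | hS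
  · exact ⟨0, map_zero T⟩
  -- `c⁻¹ • S` solves the equation up to an error of lower degree, which is solved by induction.
  have hS' : c⁻¹ • S ≠ 0 := smul_ne_zero (inv_ne_zero hc) hS
  have herr : (T (c⁻¹ • S) - S).degree < S.degree := by
    have h := hT _ hS'
    rwa [smul_smul, mul_inv_cancel₀ hc, one_smul,
      degree_smul_of_smul_regular S (IsSMulRegular.of_ne_zero (inv_ne_zero hc))] at h
  obtain ⟨Q, hQ⟩ := ih _ herr
  exact ⟨c⁻¹ • S - Q, by rw [map_sub, hQ, sub_sub_cancel]⟩

end Field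

end IsScalarModLowerDegree

noncomputable def shiftedDerivative {K : Type*} [CommRing K] (γ : K) : Module.End K K[X] :=
  derivative + γ • 1

theorem shiftedDerivative_apply {K : Type*} [CommRing K] (γ : K) (Q : K[X]) :
    shiftedDerivative γ Q = derivative Q + γ • Q := rfl

theorem isScalarModLowerDegree_shiftedDerivative {K : Type*} [CommRing K] (γ : K) :
    IsScalarModLowerDegree (shiftedDerivative γ) γ := by
  intro Q hQ
  simpa [shiftedDerivative_apply] using degree_derivative_lt hQ

end Polynomial

theorem hasDerivAt_eval_mul_cexp (γ : ℂ) (Q : ℂ[X]) (t : ℝ) :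
    HasDerivAt (fun s : ℝ => Q.eval (s : ℂ) * Complex.exp (γ * s))
      ((shiftedDerivative γ Q).eval (t : ℂ) * Complex.exp (γ * t)) t := by
  have hexp : HasDerivAt (fun z : ℂ => Complex.exp (γ * z)) (Complex.exp (γ * t) * γ) t := by
    simpa using ((hasDerivAt_id (t : ℂ)).const_mul γ).cexp
  have h : HasDerivAt (fun z : ℂ => Q.eval z * Complex.exp (γ * z))
      ((shiftedDerivative γ Q).eval (t : ℂ) * Complex.exp (γ * t)) t :=
    ((Q.hasDerivAt _).mul hexp).congr_deriv <| by
      simp only [shiftedDerivative_apply, eval_add, eval_smul, smul_eq_mul]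
      ring
  exact h.comp_ofReal

theorem iteratedDeriv_eval_mul_cexp (γ : ℂ) (Q : ℂ[X]) (j : ℕ) :
    iteratedDeriv j (fun s : ℝ => Q.eval (s : ℂ) * Complex.exp (γ * s))
      = fun t : ℝ => ((shiftedDerivative γ ^ j) Q).eval (t : ℂ) * Complex.exp (γ * t) := by
  induction j with
  | zero => rfl
  | succ j ih =>
    ext t
    rw [iteratedDeriv_succ, ih, (hasDerivAt_eval_mul_cexp γ _ t).deriv, pow_succ',
      Module.End.mul_apply]

theorem stmt_5_general (n : ℕ) (a : ℕ → ℝ) (p : Polynomial ℝ)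
    (hp : p = ∑ j ∈ range (n + 1), C (a j) * X ^ j)
    (γ : ℂ) (hγ : Polynomial.aeval γ p ≠ 0)
    (R : Polynomial ℝ) :
    ∃ Q : Polynomial ℂ, Q.degree = R.degree ∧
      ∀ t : ℝ,
        ∑ j ∈ range (n + 1),
            (a j : ℂ) *
              iteratedDeriv j (fun s : ℝ => Q.eval (s : ℂ) * Complex.exp (γ * s)) t
          = ((R.eval t : ℝ) : ℂ) * Complex.exp (γ * t) := by
  set pℂ := p.map (algebraMap ℝ ℂ)
  have hpℂ : pℂ = ∑ j ∈ range (n + 1), C (a j : ℂ) * X ^ j := by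
    simp [pℂ, hp, Polynomial.map_sum]
  have hT := (isScalarModLowerDegree_shiftedDerivative γ).aeval pℂ
  have hc : pℂ.eval γ ≠ 0 := by rwa [eval_map_algebraMap]
  obtain ⟨Q, hQ⟩ := hT.surjective hc (R.map (algebraMap ℝ ℂ))
  refine ⟨Q, by rw [← hT.degree_apply_eq hc, hQ, degree_map], fun t => ?_⟩
  have hR_eval : (R.map (algebraMap ℝ ℂ)).eval (t : ℂ) = ((R.eval t : ℝ) : ℂ) := by
    rw [eval_map_algebraMap]
    exact aeval_algebraMap_apply_eq_algebraMap_eval t R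
  rw [← hR_eval, ← hQ, hpℂ]
  simp [iteratedDeriv_eval_mul_cexp, eval_finsetSum, Finset.sum_mul, mul_assoc]

theorem stmt_5 (n : ℕ) (a : ℕ → ℝ) (p : Polynomial ℝ)
    (hp : p = ∑ j ∈ range (n + 1), C (a j) * X ^ j)
    (γ : ℂ) (hγ : Polynomial.aeval γ p ≠ 0)
    (R : Polynomial ℝ) (hR : R ≠ 0) :
    ∃ Q : Polynomial ℂ, Q.degree = R.degree ∧
      ∀ t : ℝ,
        ∑ j ∈ range (n + 1),
            (a j : ℂ) *
              iteratedDeriv j (fun s : ℝ => Q.eval (s : ℂ) * Complex.exp (γ * s)) t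
          = ((R.eval t : ℝ) : ℂ) * Complex.exp (γ * t) :=
  stmt_5_general n a p hp γ hγ R
end

section
/- Let p be the characteristic polynomial of P(d/dt) with real coefficients a_0, …, a_n (a_n ≠ 0), let γ ∈ ℂ be a root of p of multiplicity exactly k, and let R be a nonzero real polynomial. Then there exists a complex polynomial Q_1 with deg Q_1 = deg R such that x(t) = t^k Q_1(t) e^{γt} satisfies a_n x^{(n)} + ⋯ + a_0 x = R(t) e^{γt} on ℝ. -/
/-!
Write `x = q(t) e^{γt}`. Then `P(d/dt) x = (p(D + γ) q) e^{γt}` with `D = d/dt`, and by Taylor's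
formula `p(D + γ) = ∑ᵢ p⁽ⁱ⁾(γ)/i! Dⁱ`. The multiplicity hypothesis says that this sum starts at
`i = k` with a nonzero coefficient, so `Q ↦ p(D + γ)(tᵏ Q)` preserves degrees. A degree-preserving
linear endomorphism of `ℂ[X]` is injective on each finite-dimensional space of polynomials of
bounded degree, hence surjective, and `Q₁` is the preimage of `R`.
-/

open Polynomial Finset

theorem Polynomial.surjective_of_degree_eq {K : Type*} [Field K] (f : K[X] →ₗ[K] K[X])
    (hf : ∀ Q, (f Q).degree = Q.degree) : Function.Surjective f := by
  intro S
  set V := degreeLT K (S.natDegree + 1)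
  have hV : ∀ Q ∈ V, f Q ∈ V := fun Q hQ => by rwa [mem_degreeLT, hf, ← mem_degreeLT]
  have hinj : Function.Injective (f.restrict hV) := by
    rw [← LinearMap.ker_eq_bot, eq_bot_iff]
    intro Q hQ
    rw [LinearMap.mem_ker, ← Subtype.coe_inj, LinearMap.coe_restrict_apply, Submodule.coe_zero,
      ← degree_eq_bot, hf, degree_eq_bot] at hQ
    exact (Submodule.mem_bot K).2 (Subtype.ext hQ)
  have hS : S ∈ V :=
    mem_degreeLT.2 <| degree_le_natDegree.trans_lt <| by exact_mod_cast S.natDegree.lt_succ_self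
  obtain ⟨Q, hQ⟩ := LinearMap.injective_iff_surjective.1 hinj ⟨S, hS⟩
  exact ⟨Q, congrArg Subtype.val hQ⟩

theorem Polynomial.factorial_smul_coeff_taylor_map {R A : Type*} [CommSemiring R] [CommSemiring A]
    [Algebra R A] (p : R[X]) (x : A) (i : ℕ) :
    i.factorial • (taylor x (p.map (algebraMap R A))).coeff i = aeval x (derivative^[i] p) := by
  rw [taylor_coeff, aeval_def, ← eval_map, ← iterate_derivative_map, ← factorial_smul_hasseDeriv,
    LinearMap.smul_apply, eval_smul]

theorem Polynomial.aeval_add_algebraMap {R A : Type*} [CommSemiring R] [Semiring A] [Algebra R A]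
    (x : A) (r : R) (p : R[X]) : aeval (x + algebraMap R A r) p = aeval x (taylor r p) := by
  rw [taylor_apply, aeval_comp]
  simp

theorem Polynomial.degree_aeval_derivative_X_pow_mul {K : Type*} [Field K] [CharZero K]
    {k : ℕ} {F : K[X]} (hlow : ∀ i < k, F.coeff i = 0) (hk : F.coeff k ≠ 0) (Q : K[X]) :
    (aeval (derivative : Module.End K K[X]) F (X ^ k * Q)).degree = Q.degree := by
  rcases eq_or_ne Q 0 with rfl | hQ
  · simp
  set d := Q.natDegree
  have hsum : aeval (derivative : Module.End K K[X]) F (X ^ k * Q)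
      = ∑ i ∈ range (F.natDegree + 1), F.coeff i • derivative^[i] (X ^ k * Q) := by
    simp [aeval_eq_sum_range, LinearMap.sum_apply, Module.End.pow_apply]
  have hle : (aeval (derivative : Module.End K K[X]) F (X ^ k * Q)).natDegree ≤ d := by
    rw [hsum]
    refine natDegree_sum_le_of_forall_le _ _ fun i _ => ?_
    rcases lt_or_ge i k with hi | hi
    · simp [hlow i hi]
    · refine (natDegree_smul_le _ _).trans <| (natDegree_iterate_derivative _ _).trans ?_
      have := natDegree_mul_le (p := (X ^ k : K[X])) (q := Q)
      rw [natDegree_X_pow] at this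
      omega
  have hcoeff : (aeval (derivative : Module.End K K[X]) F (X ^ k * Q)).coeff d
      = F.coeff k * ((d + k).descFactorial k • Q.leadingCoeff) := by
    rw [hsum, finsetSum_coeff, Finset.sum_eq_single k]
    · rw [coeff_smul, coeff_iterate_derivative, coeff_X_pow_mul, smul_eq_mul]; rfl
    · intro i _ hik
      rcases lt_or_gt_of_ne hik with hi | hi
      · simp [hlow i hi]
      · rw [coeff_smul, coeff_iterate_derivative, show d + i = d + (i - k) + k by omega,
          coeff_X_pow_mul, coeff_eq_zero_of_natDegree_lt (p := Q) (n := d + (i - k)) (by omega)]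
        simp
    · intro hk'
      exact absurd (coeff_eq_zero_of_natDegree_lt (by simpa using hk')) hk
  have hne : (aeval (derivative : Module.End K K[X]) F (X ^ k * Q)).coeff d ≠ 0 := by
    rw [hcoeff]
    refine mul_ne_zero hk (smul_ne_zero ?_ (leadingCoeff_ne_zero.2 hQ))
    exact (Nat.descFactorial_pos.2 (by omega)).ne'
  rw [degree_eq_natDegree hQ, degree_eq_natDegree (fun h => hne (by simp [h])),
    natDegree_eq_of_le_of_coeff_ne_zero hle hne]

theorem Polynomial.hasDerivAt_eval_ofReal_mul_exp (q : ℂ[X]) (γ : ℂ) (t : ℝ) :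
    HasDerivAt (fun s : ℝ => q.eval (s : ℂ) * Complex.exp (γ * s))
      ((derivative q + C γ * q).eval (t : ℂ) * Complex.exp (γ * t)) t := by
  have hexp : HasDerivAt (fun s : ℝ => Complex.exp (γ * s)) (Complex.exp (γ * t) * γ) t := by
    simpa using (((hasDerivAt_id (t : ℂ)).const_mul γ).cexp).comp_ofReal
  refine ((q.hasDerivAt (t : ℂ)).comp_ofReal.mul hexp).congr_deriv ?_
  simp only [eval_add, eval_mul, eval_C]
  ring

theorem Polynomial.iteratedDeriv_eval_ofReal_mul_exp (q : ℂ[X]) (γ : ℂ) (j : ℕ) (t : ℝ) :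
    iteratedDeriv j (fun s : ℝ => q.eval (s : ℂ) * Complex.exp (γ * s)) t
      = ((((derivative : Module.End ℂ ℂ[X]) + algebraMap ℂ _ γ) ^ j) q).eval (t : ℂ)
          * Complex.exp (γ * t) := by
  induction j generalizing q with
  | zero => simp
  | succ j ih =>
    have hderiv : deriv (fun s : ℝ => q.eval (s : ℂ) * Complex.exp (γ * s))
        = fun s : ℝ => (derivative q + C γ * q).eval (s : ℂ) * Complex.exp (γ * s) :=
      _root_.funext fun s => (q.hasDerivAt_eval_ofReal_mul_exp γ s).deriv
    rw [iteratedDeriv_succ', hderiv, ih, pow_succ, Module.End.mul_apply]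
    simp [Algebra.algebraMap_eq_smul_one, smul_eq_C_mul]

theorem Polynomial.sum_mul_iteratedDeriv_eval_ofReal_mul_exp (s : Finset ℕ) (b : ℕ → ℂ)
    (q : ℂ[X]) (γ : ℂ) (t : ℝ) :
    ∑ j ∈ s, b j * iteratedDeriv j (fun s : ℝ => q.eval (s : ℂ) * Complex.exp (γ * s)) t
      = (aeval ((derivative : Module.End ℂ ℂ[X]) + algebraMap ℂ _ γ)
          (∑ j ∈ s, C (b j) * X ^ j) q).eval (t : ℂ) * Complex.exp (γ * t) := by
  simp [iteratedDeriv_eval_ofReal_mul_exp, map_sum, LinearMap.sum_apply, eval_finsetSum,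
    Finset.sum_mul, mul_assoc]

theorem stmt_6_general (n k : ℕ) (a : ℕ → ℝ) (p : Polynomial ℝ)
    (hp : p = ∑ j ∈ range (n + 1), C (a j) * X ^ j)
    (γ : ℂ)
    (hroot : ∀ j < k, Polynomial.aeval γ (Polynomial.derivative^[j] p) = 0)
    (hmult : Polynomial.aeval γ (Polynomial.derivative^[k] p) ≠ 0)
    (R : Polynomial ℝ) :
    ∃ Q₁ : Polynomial ℂ, Q₁.degree = R.degree ∧
      ∀ t : ℝ,
        ∑ j ∈ range (n + 1),
            (a j : ℂ) *
              iteratedDeriv j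
                (fun s : ℝ => (s : ℂ) ^ k * Q₁.eval (s : ℂ) * Complex.exp (γ * s)) t
          = ((R.eval t : ℝ) : ℂ) * Complex.exp (γ * t) := by
  set F := taylor γ (p.map (algebraMap ℝ ℂ))
  have hF : ∀ i, i.factorial • F.coeff i = aeval γ (derivative^[i] p) :=
    p.factorial_smul_coeff_taylor_map γ
  have hlow : ∀ i < k, F.coeff i = 0 := fun i hi =>
    (smul_eq_zero.1 ((hF i).trans (hroot i hi))).resolve_left i.factorial_ne_zero
  have hk : F.coeff k ≠ 0 := fun h => hmult (by rw [← hF, h, smul_zero])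
  let T : ℂ[X] →ₗ[ℂ] ℂ[X] :=
    aeval (derivative : Module.End ℂ ℂ[X]) F ∘ₗ LinearMap.mulLeft ℂ (X ^ k)
  have hT : ∀ Q, (T Q).degree = Q.degree := degree_aeval_derivative_X_pow_mul hlow hk
  obtain ⟨Q₁, hQ₁⟩ := surjective_of_degree_eq T hT (R.map (algebraMap ℝ ℂ))
  refine ⟨Q₁, by rw [← hT, hQ₁, degree_map], fun t => ?_⟩
  have hfun : (fun s : ℝ => (s : ℂ) ^ k * Q₁.eval (s : ℂ) * Complex.exp (γ * s))
      = fun s : ℝ => (X ^ k * Q₁).eval (s : ℂ) * Complex.exp (γ * s) := by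
    simp [eval_mul]
  have hP : p.map (algebraMap ℝ ℂ) = ∑ j ∈ range (n + 1), C (a j : ℂ) * X ^ j := by
    simp [hp, Polynomial.map_sum]
  rw [hfun, sum_mul_iteratedDeriv_eval_ofReal_mul_exp, ← hP, aeval_add_algebraMap]
  change (T Q₁).eval (t : ℂ) * _ = _
  rw [hQ₁, eval_map, ← aeval_def, ← Complex.coe_algebraMap, aeval_algebraMap_apply]
  simp

theorem stmt_6 (n k : ℕ) (a : ℕ → ℝ) (han : a n ≠ 0) (p : Polynomial ℝ)
    (hp : p = ∑ j ∈ range (n + 1), C (a j) * X ^ j)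
    (γ : ℂ)
    (hroot : ∀ j < k, Polynomial.aeval γ (Polynomial.derivative^[j] p) = 0)
    (hmult : Polynomial.aeval γ (Polynomial.derivative^[k] p) ≠ 0)
    (R : Polynomial ℝ) (hR : R ≠ 0) :
    ∃ Q₁ : Polynomial ℂ, Q₁.degree = R.degree ∧
      ∀ t : ℝ,
        ∑ j ∈ range (n + 1),
            (a j : ℂ) *
              iteratedDeriv j
                (fun s : ℝ => (s : ℂ) ^ k * Q₁.eval (s : ℂ) * Complex.exp (γ * s)) t
          = ((R.eval t : ℝ) : ℂ) * Complex.exp (γ * t) :=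
  stmt_6_general n k a p hp γ hroot hmult R
end

section
/- Let a_0, …, a_n be complex numbers, not all of a_1, …, a_n zero, and let R be a nonzero complex polynomial of degree at most n. Then there exists a complex polynomial Q such that a_0 Q + a_1 Q' + ⋯ + a_n Q^{(n)} = R. -/
open Polynomial Finset

/-!
If `k` is the least index with `a k ≠ 0`, the operator `L = ∑ a_j D^j` sends `X^(d+k)` to a
polynomial of degree exactly `d`, with leading coefficient `a_k (d+k)!/d!`. These images form a
polynomial sequence, which spans `K[X]`, so `L` is surjective.
-/

theorem Polynomial.surjective_of_degree_eq_s18 {K : Type*} [Field K]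
    (L : K[X] →ₗ[K] K[X]) (P : ℕ → K[X]) (h : ∀ d : ℕ, (L (P d)).degree = d) :
    Function.Surjective L := by
  let S : Polynomial.Sequence K := ⟨fun d => L (P d), h⟩
  have hS : Submodule.span K (Set.range S) = ⊤ :=
    S.span fun d => (leadingCoeff_ne_zero.mpr (S.ne_zero d)).isUnit
  rw [← LinearMap.range_eq_top, eq_top_iff, ← hS, Submodule.span_le]
  rintro _ ⟨d, rfl⟩
  exact LinearMap.mem_range_self L (P d)

namespace Polynomial

noncomputable def constCoeffDiffOp {R : Type*} [CommSemiring R] (n : ℕ) (a : ℕ → R) :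
    R[X] →ₗ[R] R[X] :=
  ∑ j ∈ range (n + 1), a j • derivative ^ j

theorem constCoeffDiffOp_apply {R : Type*} [CommSemiring R] (n : ℕ) (a : ℕ → R) (Q : R[X]) :
    constCoeffDiffOp n a Q = ∑ j ∈ range (n + 1), C (a j) * derivative^[j] Q := by
  simp [constCoeffDiffOp, LinearMap.sum_apply, Module.End.pow_apply, smul_eq_C_mul]

variable {K : Type*} [Field K] [CharZero K]

theorem degree_constCoeffDiffOp_X_pow {n k : ℕ} {a : ℕ → K} (hkn : k ≤ n)
    (hk : a k ≠ 0) (hlt : ∀ j < k, a j = 0) (d : ℕ) :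
    (constCoeffDiffOp n a (X ^ (d + k))).degree = d := by
  rw [constCoeffDiffOp_apply]
  apply degree_eq_of_le_of_coeff_ne_zero
  · refine degree_le_natDegree.trans (Nat.cast_le.mpr (natDegree_sum_le_of_forall_le _ _ ?_))
    intro j _
    rcases lt_or_ge j k with hj | hj
    · simp [hlt j hj]
    · calc (C (a j) * derivative^[j] (X ^ (d + k) : K[X])).natDegree
          ≤ (derivative^[j] (X ^ (d + k) : K[X])).natDegree := natDegree_C_mul_le _ _
        _ ≤ (X ^ (d + k) : K[X]).natDegree - j := natDegree_iterate_derivative _ _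
        _ ≤ d := by rw [natDegree_X_pow]; omega
  · rw [finsetSum_coeff, sum_eq_single k]
    · simp [coeff_iterate_derivative, hk, Nat.descFactorial_eq_zero_iff_lt]
    · intro j _ hjk
      simp [coeff_iterate_derivative, coeff_X_pow, hjk]
    · simp only [mem_range, not_lt]
      omega

theorem constCoeffDiffOp_surjective {n : ℕ} {a : ℕ → K} (ha : ∃ j ≤ n, a j ≠ 0) :
    Function.Surjective (constCoeffDiffOp n a) := by
  classical
  have hex : ∃ j, a j ≠ 0 := ha.imp fun _ => And.right
  obtain ⟨j, hjn, hj⟩ := ha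
  exact surjective_of_degree_eq_s18 _ _ <|
    degree_constCoeffDiffOp_X_pow ((Nat.find_min' hex hj).trans hjn) (Nat.find_spec hex)
      fun i hi => not_not.mp (Nat.find_min hex hi)

end Polynomial

theorem stmt_18_general (n : ℕ) (a : ℕ → ℂ)
    (ha : ∃ j, 1 ≤ j ∧ j ≤ n ∧ a j ≠ 0)
    (R : Polynomial ℂ) :
    ∃ Q : Polynomial ℂ,
      ∑ j ∈ range (n + 1), C (a j) * Polynomial.derivative^[j] Q = R := by
  obtain ⟨j, -, hjn, hj⟩ := ha
  obtain ⟨Q, hQ⟩ := constCoeffDiffOp_surjective ⟨j, hjn, hj⟩ R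
  exact ⟨Q, by rwa [constCoeffDiffOp_apply] at hQ⟩

theorem stmt_18 (n : ℕ) (a : ℕ → ℂ)
    (ha : ∃ j, 1 ≤ j ∧ j ≤ n ∧ a j ≠ 0)
    (R : Polynomial ℂ) (hR : R ≠ 0) (hdeg : R.degree ≤ (n : ℕ)) :
    ∃ Q : Polynomial ℂ,
      ∑ j ∈ range (n + 1), C (a j) * Polynomial.derivative^[j] Q = R :=
  stmt_18_general n a ha R
end
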